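/- arXiv:2004.13417 — 5 statements merged into one kernel-verified Lean document; each statement's English description precedes it below -/
import Mathlib

section
/- For any nonzero vector a ∈ ℝ^n, any b ∈ ℝ and any δ > 0, the gradient of h_δ(·; a, b) is Lipschitz continuous with constant ‖a‖/(2δ): for all x, y ∈ ℝ^n, ‖∇h_δ(x; a, b) − ∇h_δ(y; a, b)‖ ≤ (‖a‖/(2δ)) ‖x − y‖. -/
/-!
The penalty depends on `x` only through `s = ⟪a, x⟫ - b`: `h_δ(x; a, b) = p_δ(s) / ‖a‖` with
`p_δ(s) = (max (s + δ) 0 ^ 2 - max (s - δ) 0 ^ 2) / (4δ)`, a difference of squared ramps and so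
`C¹`. Its derivative `p'_δ(s) = (max (s + δ) 0 - max (s - δ) 0) / (2δ)` is `1/(2δ)`-Lipschitz, so
`∇h_δ(x) = p'_δ(⟪a, x⟫ - b) / ‖a‖ • a`, and Cauchy–Schwarz, `|⟪a, x - y⟫| ≤ ‖a‖ ‖x - y‖`, turns
this into the constant `‖a‖ / (2δ)`.
-/

open scoped RealInnerProductSpace

/-- The one-sided Huber penalty `h_δ(x; a, b)`. -/
noncomputable def huber {n : ℕ} (δ : ℝ) (a : EuclideanSpace ℝ (Fin n)) (b : ℝ)
    (x : EuclideanSpace ℝ (Fin n)) : ℝ :=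
  if δ < ⟪a, x⟫ - b then (⟪a, x⟫ - b) / ‖a‖
  else if -δ ≤ ⟪a, x⟫ - b then (⟪a, x⟫ - b + δ) ^ 2 / (4 * δ * ‖a‖)
  else 0

lemma hasDerivAt_max_zero_sq (s : ℝ) :
    HasDerivAt (fun t : ℝ => max t 0 ^ 2) (2 * max s 0) s := by
  refine hasDerivAt_of_hasDerivAt_of_ne' (g := fun t => 2 * max t 0) (x := 0)
    (fun t ht => ?_) (by fun_prop) (by fun_prop) s
  rcases ht.lt_or_gt with ht | ht
  · have hzero : (fun u : ℝ => max u 0 ^ 2) =ᶠ[nhds t] fun _ => 0 := by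
      filter_upwards [eventually_lt_nhds ht] with u hu
      simp [max_eq_right hu.le]
    simpa [max_eq_right ht.le] using (hasDerivAt_const t (0 : ℝ)).congr_of_eventuallyEq hzero
  · have hsq : (fun u : ℝ => max u 0 ^ 2) =ᶠ[nhds t] fun u => u ^ 2 := by
      filter_upwards [eventually_gt_nhds ht] with u hu
      rw [max_eq_left hu.le]
    simpa [max_eq_left ht.le] using (hasDerivAt_pow 2 t).congr_of_eventuallyEq hsq

noncomputable def scalarHuber (δ s : ℝ) : ℝ :=
  (max (s + δ) 0 ^ 2 - max (s - δ) 0 ^ 2) / (4 * δ)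

noncomputable def scalarHuberDeriv (δ s : ℝ) : ℝ :=
  (max (s + δ) 0 - max (s - δ) 0) / (2 * δ)

lemma hasDerivAt_scalarHuber (δ s : ℝ) :
    HasDerivAt (scalarHuber δ) (scalarHuberDeriv δ s) s := by
  have hplus := (hasDerivAt_max_zero_sq (s + δ)).comp_add_const s δ
  have hminus := (hasDerivAt_max_zero_sq (s - δ)).comp_sub_const s δ
  exact ((hplus.sub hminus).div_const (4 * δ)).congr_deriv (by rw [scalarHuberDeriv]; ring)

lemma abs_max_add_sub_max_sub_sub_le (δ s t : ℝ) :
    |(max (s + δ) 0 - max (s - δ) 0) - (max (t + δ) 0 - max (t - δ) 0)| ≤ |s - t| := by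
  -- both `t ↦ max (t ± δ) 0` are monotone and 1-Lipschitz, so their difference moves by at most
  -- `|s - t|`
  grind

lemma abs_scalarHuberDeriv_sub_le {δ : ℝ} (hδ : 0 < δ) (s t : ℝ) :
    |scalarHuberDeriv δ s - scalarHuberDeriv δ t| ≤ |s - t| / (2 * δ) := by
  rw [scalarHuberDeriv, scalarHuberDeriv, ← sub_div, abs_div,
    abs_of_pos (by positivity : 0 < 2 * δ)]
  exact div_le_div_of_nonneg_right (abs_max_add_sub_max_sub_sub_le δ s t) (by positivity)

lemma HasDerivAt.hasGradientAt_comp_inner_sub {E : Type*} [NormedAddCommGroup E]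
    [InnerProductSpace ℝ E] [CompleteSpace E] {f : ℝ → ℝ} {f' : ℝ} {a x : E} {b : ℝ}
    (hf : HasDerivAt f f' (⟪a, x⟫ - b)) :
    HasGradientAt (fun y => f (⟪a, y⟫ - b)) (f' • a) x := by
  rw [hasGradientAt_iff_hasFDerivAt]
  exact (hf.comp_hasFDerivAt x ((innerSL ℝ a).hasFDerivAt.sub_const b)).congr_fderiv
    (by ext y; simp)

lemma huber_eq_div_norm {n : ℕ} {δ : ℝ} (hδ : 0 < δ) (a : EuclideanSpace ℝ (Fin n)) (b : ℝ) :
    huber δ a b = fun x => scalarHuber δ (⟪a, x⟫ - b) / ‖a‖ := by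
  funext x
  unfold huber scalarHuber
  split_ifs with hlin hquad
  · rw [max_eq_left (by linarith), max_eq_left (by linarith)]
    field_simp
    ring
  · rw [max_eq_left (by linarith), max_eq_right (by linarith)]
    ring
  · rw [max_eq_right (by linarith), max_eq_right (by linarith)]
    simp

lemma gradient_huber {n : ℕ} {δ : ℝ} (hδ : 0 < δ) (a : EuclideanSpace ℝ (Fin n)) (b : ℝ)
    (x : EuclideanSpace ℝ (Fin n)) :
    gradient (huber δ a b) x = (scalarHuberDeriv δ (⟪a, x⟫ - b) / ‖a‖) • a := by
  rw [huber_eq_div_norm hδ]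
  exact ((hasDerivAt_scalarHuber δ _).div_const ‖a‖).hasGradientAt_comp_inner_sub.gradient

/-- For `δ > 0`, the gradient of the one-sided Huber penalty is Lipschitz continuous with
constant `‖a‖/(2δ)`. -/
theorem huber_gradient_lipschitz {n : ℕ} (a : EuclideanSpace ℝ (Fin n)) (ha : a ≠ 0) (b : ℝ)
    (δ : ℝ) (hδ : 0 < δ) (x y : EuclideanSpace ℝ (Fin n)) :
    ‖gradient (huber δ a b) x - gradient (huber δ a b) y‖ ≤ ‖a‖ / (2 * δ) * ‖x - y‖ := by
  have hinner : |(⟪a, x⟫ - b) - (⟪a, y⟫ - b)| ≤ ‖a‖ * ‖x - y‖ := by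
    rw [sub_sub_sub_cancel_right, ← inner_sub_right]
    exact abs_real_inner_le_norm a (x - y)
  rw [gradient_huber hδ, gradient_huber hδ, ← sub_smul, norm_smul, ← sub_div, Real.norm_eq_abs,
    abs_div, abs_norm, div_mul_cancel₀ _ (norm_ne_zero_iff.mpr ha)]
  calc _ ≤ |(⟪a, x⟫ - b) - (⟪a, y⟫ - b)| / (2 * δ) := abs_scalarHuberDeriv_sub_le hδ _ _
    _ ≤ ‖a‖ * ‖x - y‖ / (2 * δ) := by gcongr
    _ = ‖a‖ / (2 * δ) * ‖x - y‖ := by ring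
end

section
/- For any nonzero vector a ∈ ℝ^n, any b ∈ ℝ, any δ ≥ 0, and all x ∈ ℝ^n, one has h_δ(x; a, b) ≥ (1/4) dist(x, Y), where Y = {y ∈ ℝ^n : ⟨a,y⟩ ≤ b} and dist denotes the Euclidean distance to the set Y. -/
/-!
The point `x - (s⁺ / ‖a‖²) • a`, with `s = ⟪a, x⟫ - b`, lies in the halfspace at distance
`s⁺ / ‖a‖`, and `h_δ(x; a, b)` is a scalar profile of `s` divided by `‖a‖`. That profile dominates
`s⁺ / 4`: on the quadratic piece with `s > 0` this is `(s + δ)² ≥ δ s`.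
-/

open scoped RealInnerProductSpace

theorem infDist_halfspace_le {E : Type*} [NormedAddCommGroup E] [InnerProductSpace ℝ E]
    {a : E} (ha : a ≠ 0) (b : ℝ) (x : E) :
    Metric.infDist x {y | ⟪a, y⟫ ≤ b} ≤ max (⟪a, x⟫ - b) 0 / ‖a‖ := by
  have hna : ‖a‖ ≠ 0 := norm_ne_zero_iff.mpr ha
  set t := max (⟪a, x⟫ - b) 0 / ‖a‖ ^ 2
  have ht : t * ‖a‖ ^ 2 = max (⟪a, x⟫ - b) 0 := div_mul_cancel₀ _ (pow_ne_zero 2 hna)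
  calc Metric.infDist x {y | ⟪a, y⟫ ≤ b} ≤ dist x (x - t • a) := by
        refine Metric.infDist_le_dist_of_mem ?_
        rw [Set.mem_ofPred_eq, inner_sub_right, real_inner_smul_right,
          real_inner_self_eq_norm_sq, ht]
        linarith [le_max_left (⟪a, x⟫ - b) 0]
    _ = max (⟪a, x⟫ - b) 0 / ‖a‖ := by
        rw [dist_eq_norm, sub_sub_cancel, norm_smul, Real.norm_of_nonneg (by positivity), ← ht]
        field_simp

noncomputable def huberScalar (δ t : ℝ) : ℝ :=
  if δ < t then t else if -δ ≤ t then (t + δ) ^ 2 / (4 * δ) else 0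

theorem huber_eq_huberScalar_div {n : ℕ} (δ : ℝ) (a : EuclideanSpace ℝ (Fin n)) (b : ℝ)
    (x : EuclideanSpace ℝ (Fin n)) : huber δ a b x = huberScalar δ (⟪a, x⟫ - b) / ‖a‖ := by
  unfold huber huberScalar
  split_ifs <;> simp [div_div]

theorem max_zero_div_four_le_huberScalar {δ : ℝ} (hδ : 0 ≤ δ) (t : ℝ) :
    max t 0 / 4 ≤ huberScalar δ t := by
  unfold huberScalar
  split_ifs with hδt htδ
  · rw [max_eq_left (hδ.trans hδt.le)]
    linarith [hδ.trans_lt hδt]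
  · rcases le_or_gt t 0 with ht | ht
    · rw [max_eq_right ht, zero_div]
      positivity
    · have hδpos : 0 < δ := ht.trans_le (not_lt.mp hδt)
      rw [max_eq_left ht.le, div_le_div_iff₀ (by norm_num) (by positivity)]
      nlinarith
  · rw [max_eq_right (by linarith)]
    norm_num

/-- The one-sided Huber penalty dominates a quarter of the Euclidean distance to the
halfspace `Y = {y : ⟨a,y⟩ ≤ b}`. -/
theorem huber_ge_quarter_dist {n : ℕ} (a : EuclideanSpace ℝ (Fin n)) (ha : a ≠ 0) (b : ℝ)
    (δ : ℝ) (hδ : 0 ≤ δ) (x : EuclideanSpace ℝ (Fin n)) :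
    (1 / 4) * Metric.infDist x {y : EuclideanSpace ℝ (Fin n) | ⟪a, y⟫ ≤ b} ≤ huber δ a b x := by
  rw [huber_eq_huberScalar_div]
  calc (1 / 4) * Metric.infDist x {y | ⟪a, y⟫ ≤ b}
      ≤ (1 / 4) * (max (⟪a, x⟫ - b) 0 / ‖a‖) := by
        gcongr
        exact infDist_halfspace_le ha b x
    _ = max (⟪a, x⟫ - b) 0 / 4 / ‖a‖ := by ring
    _ ≤ huberScalar δ (⟪a, x⟫ - b) / ‖a‖ := by
        gcongr
        exact max_zero_div_four_le_huberScalar hδ _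
end

section
/- Let γ > 0 and δ ≥ 0 be arbitrary, and let x̂ ∈ ℝ^n satisfy ⟨a_i, x̂⟩ ≤ b_i for all i = 1,…,m. Define t = f(x̂) + γδ/(4 min_{1≤i≤m} ‖a_i‖). Then the level set {x ∈ ℝ^n : F_{γδ}(x) ≤ t} is nonempty, and every minimizer of F_{γδ} over ℝ^n belongs to the level set {x ∈ ℝ^n : f(x) ≤ t}. -/
open scoped RealInnerProductSpace

/-!
Since `h_δ ≥ 0`, the penalized objective dominates `f`; and at a feasible point each penalty
term is at most `δ / (4 ‖aᵢ‖) ≤ δ / (4 minᵢ ‖aᵢ‖)` (the quadratic piece is maximal at the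
constraint boundary), so `F_{γδ}(x̂) ≤ t`. A minimizer `x` then satisfies
`f x ≤ F_{γδ} x ≤ F_{γδ} x̂ ≤ t`.
-/

section Huber

variable {n : ℕ} {δ : ℝ} (a : EuclideanSpace ℝ (Fin n)) (b : ℝ) (x : EuclideanSpace ℝ (Fin n))

lemma huber_nonneg (hδ : 0 ≤ δ) : 0 ≤ huber δ a b x := by
  unfold huber
  split_ifs with hlin
  · exact div_nonneg (by linarith) (norm_nonneg a)
  · positivity
  · rfl

lemma huber_le_of_inner_le (hδ : 0 ≤ δ) (hx : ⟪a, x⟫ ≤ b) : huber δ a b x ≤ δ / (4 * ‖a‖) := by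
  unfold huber
  split_ifs with hlin hquad
  · linarith
  · have hsq : (⟪a, x⟫ - b + δ) ^ 2 / δ ≤ δ :=
      div_le_of_le_mul₀ hδ hδ (by nlinarith)
    calc (⟪a, x⟫ - b + δ) ^ 2 / (4 * δ * ‖a‖) = (⟪a, x⟫ - b + δ) ^ 2 / δ / (4 * ‖a‖) := by
          rw [div_div]; ring_nf
      _ ≤ δ / (4 * ‖a‖) := by gcongr
  · positivity

end Huber

section Penalty

variable {n m : ℕ} (γ δ : ℝ) (a : Fin m → EuclideanSpace ℝ (Fin n)) (b : Fin m → ℝ)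

/-- `F_{γδ} = f + penalty γ δ a b`. -/
noncomputable def penalty (x : EuclideanSpace ℝ (Fin n)) : ℝ :=
  (γ / m) * ∑ i, huber δ (a i) (b i) x

variable {γ δ}

lemma penalty_nonneg (hγ : 0 ≤ γ) (hδ : 0 ≤ δ) (x : EuclideanSpace ℝ (Fin n)) :
    0 ≤ penalty γ δ a b x :=
  mul_nonneg (by positivity) (Finset.sum_nonneg fun i _ => huber_nonneg (a i) (b i) x hδ)

lemma huber_le_div_iInf_norm (ha : ∀ i, a i ≠ 0) (hδ : 0 ≤ δ) {x : EuclideanSpace ℝ (Fin n)}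
    (hx : ∀ i, ⟪a i, x⟫ ≤ b i) (i : Fin m) :
    huber δ (a i) (b i) x ≤ δ / (4 * ⨅ j, ‖a j‖) := by
  have : Nonempty (Fin m) := ⟨i⟩
  obtain ⟨j, hj⟩ := exists_eq_ciInf_of_finite (f := fun j => ‖a j‖)
  have hpos : 0 < ⨅ j, ‖a j‖ := hj ▸ norm_pos_iff.mpr (ha j)
  calc huber δ (a i) (b i) x ≤ δ / (4 * ‖a i‖) := huber_le_of_inner_le (a i) (b i) x hδ (hx i)
    _ ≤ δ / (4 * ⨅ j, ‖a j‖) := by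
      gcongr
      exact ciInf_le (Set.finite_range _).bddBelow i

lemma penalty_le_of_feasible (ha : ∀ i, a i ≠ 0) (hγ : 0 ≤ γ) (hδ : 0 ≤ δ)
    {x : EuclideanSpace ℝ (Fin n)} (hx : ∀ i, ⟪a i, x⟫ ≤ b i) :
    penalty γ δ a b x ≤ γ * δ / (4 * ⨅ i, ‖a i‖) := by
  rcases Nat.eq_zero_or_pos m with rfl | hm
  · simp [penalty]
  have hsum : ∑ i, huber δ (a i) (b i) x ≤ m * (δ / (4 * ⨅ i, ‖a i‖)) := by
    simpa using Finset.sum_le_sum (s := Finset.univ) fun i _ => huber_le_div_iInf_norm a b ha hδ hx i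
  calc penalty γ δ a b x ≤ (γ / m) * (m * (δ / (4 * ⨅ i, ‖a i‖))) :=
        mul_le_mul_of_nonneg_left hsum (by positivity)
    _ = γ * δ / (4 * ⨅ i, ‖a i‖) := by field_simp

end Penalty

theorem level_set_of_penalized_general {n m : ℕ} (f : EuclideanSpace ℝ (Fin n) → ℝ)
    (a : Fin m → EuclideanSpace ℝ (Fin n)) (ha : ∀ i, a i ≠ 0) (b : Fin m → ℝ)
    (γ δ : ℝ) (hγ : 0 < γ) (hδ : 0 ≤ δ)
    (xhat : EuclideanSpace ℝ (Fin n)) (hxhat : ∀ i, ⟪a i, xhat⟫ ≤ b i)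
    (F : EuclideanSpace ℝ (Fin n) → ℝ)
    (hF : F = fun x => f x + (γ / m) * ∑ i, huber δ (a i) (b i) x)
    (t : ℝ) (ht : t = f xhat + γ * δ / (4 * ⨅ i, ‖a i‖)) :
    ({x : EuclideanSpace ℝ (Fin n) | F x ≤ t}.Nonempty) ∧
      ∀ x, IsMinOn F Set.univ x → f x ≤ t := by
  replace hF : F = fun x => f x + penalty γ δ a b x := hF
  subst hF ht
  have hFxhat : f xhat + penalty γ δ a b xhat ≤ f xhat + γ * δ / (4 * ⨅ i, ‖a i‖) :=
    by gcongr; exact penalty_le_of_feasible a b ha hγ.le hδ hxhat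
  refine ⟨⟨xhat, hFxhat⟩, fun x hmin => ?_⟩
  have hFx : f x + penalty γ δ a b x ≤ f xhat + penalty γ δ a b xhat := hmin (Set.mem_univ xhat)
  linarith [penalty_nonneg a b hγ.le hδ x]

/-- Corollary: for any `γ > 0`, `δ ≥ 0` and any feasible point `x̂`, letting
`t = f(x̂) + γδ/(4 min_i ‖a_i‖)`, the level set `{x : F_{γδ}(x) ≤ t}` is nonempty and every
minimizer of `F_{γδ}` over `ℝⁿ` satisfies `f(x) ≤ t`. -/
theorem level_set_of_penalized {n m : ℕ} (hm : 0 < m) (f : EuclideanSpace ℝ (Fin n) → ℝ)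
    (a : Fin m → EuclideanSpace ℝ (Fin n)) (ha : ∀ i, a i ≠ 0) (b : Fin m → ℝ)
    (γ δ : ℝ) (hγ : 0 < γ) (hδ : 0 ≤ δ)
    (xhat : EuclideanSpace ℝ (Fin n)) (hxhat : ∀ i, ⟪a i, xhat⟫ ≤ b i)
    (F : EuclideanSpace ℝ (Fin n) → ℝ)
    (hF : F = fun x => f x + (γ / m) * ∑ i, huber δ (a i) (b i) x)
    (t : ℝ) (ht : t = f xhat + γ * δ / (4 * ⨅ i, ‖a i‖)) :
    ({x : EuclideanSpace ℝ (Fin n) | F x ≤ t}.Nonempty) ∧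
      ∀ x, IsMinOn F Set.univ x → f x ≤ t :=
  level_set_of_penalized_general f a ha b γ δ hγ hδ xhat hxhat F hF t ht
end

section
/- (Chung's lemma) Let {u_k} be a nonnegative real sequence, let 0 < s ≤ 1, a > 0, t > 0, C > 0 and k_0 ∈ ℕ be such that u_{k+1} ≤ (1 − a/k^s) u_k + C/k^{s+t} for all k > k_0, and assume additionally that a > t in the case s = 1. Then there exists a constant C' > 0 such that u_k ≤ C'/k^t for all k ≥ 1. -/
/-!
The sequence `v_k = C' / k^t` is, for `k` large and `C'` large, a supersolution of the recurrence:
`(1 - a/k^s) v_k + C/k^(s+t) ≤ v_{k+1}`. Indeed `v_k - v_{k+1} ≤ t C' / k^(t+1)` by the tangent line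
of `x ↦ x^(-t)`, and the gain `(a C' - C)/k^(s+t)` dominates this once `t k^(s-1) ≤ a - δ`,
which is where `a > t` is needed when `s = 1`. Since `1 - a/k^s ≥ 0` eventually, `u ≤ v` propagates
from one index onwards, and the finitely many earlier terms are absorbed into `C'`.
-/

open Real Filter Finset Topology

lemma one_sub_div_mul_add_one_rpow_le {x t : ℝ} (hx : 0 < x) (ht : 0 ≤ t) :
    (1 - t / x) * (x + 1) ^ t ≤ x ^ t := by
  have hlog : log (x + 1) - log x ≤ 1 / x := by
    rw [← log_div (by positivity) hx.ne']
    calc log ((x + 1) / x) ≤ (x + 1) / x - 1 := log_le_sub_one_of_pos (by positivity)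
      _ = 1 / x := by field_simp; ring
  rw [rpow_def_of_pos (by positivity), rpow_def_of_pos hx]
  calc (1 - t / x) * exp (log (x + 1) * t)
      ≤ exp (-(t * (1 / x))) * exp (log (x + 1) * t) := by
        gcongr
        linarith [add_one_le_exp (-(t * (1 / x))), mul_one_div t x]
    _ ≤ exp (-(t * (log (x + 1) - log x))) * exp (log (x + 1) * t) := by gcongr
    _ = exp (log x * t) := by rw [← exp_add]; ring_nf

lemma recurrence_div_rpow_le {a s t C D x : ℝ} (hx : 0 < x) (ht : 0 ≤ t) (hD : 0 ≤ D)
    (h : C + D * t * x ^ (s - 1) ≤ a * D) :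
    (1 - a / x ^ s) * (D / x ^ t) + C / x ^ (s + t) ≤ D / (x + 1) ^ t := by
  have hp : 0 < x ^ s := rpow_pos_of_pos hx s
  have hq : 0 < x ^ t := rpow_pos_of_pos hx t
  have hr : 0 < (x + 1) ^ t := rpow_pos_of_pos (by linarith) t
  rw [rpow_sub_one hx.ne'] at h
  calc (1 - a / x ^ s) * (D / x ^ t) + C / x ^ (s + t)
      = D / x ^ t - (a * D - C) / (x ^ s * x ^ t) := by
        rw [rpow_add hx]; field_simp; ring
    _ ≤ D / x ^ t - D * t * (x ^ s / x) / (x ^ s * x ^ t) := by gcongr; linarith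
    _ = (1 - t / x) * D / x ^ t := by field_simp
    _ ≤ D / (x + 1) ^ t := by
        rw [div_le_div_iff₀ hq hr, mul_right_comm, mul_comm D]
        exact mul_le_mul_of_nonneg_right (one_sub_div_mul_add_one_rpow_le hx ht) hD

lemma le_of_recurrence_le {u v α β : ℕ → ℝ} {K : ℕ} (hα : ∀ k ≥ K, 0 ≤ α k)
    (hu : ∀ k ≥ K, u (k + 1) ≤ α k * u k + β k) (hv : ∀ k ≥ K, α k * v k + β k ≤ v (k + 1))
    (hK : u K ≤ v K) {k : ℕ} (hk : K ≤ k) : u k ≤ v k := by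
  induction k, hk using Nat.le_induction with
  | base => exact hK
  | succ k hk ih =>
    calc u (k + 1) ≤ α k * u k + β k := hu k hk
      _ ≤ α k * v k + β k := by gcongr; exact hα k hk
      _ ≤ v (k + 1) := hv k hk

lemma exists_pos_eventually_mul_rpow_sub_one_le {s a t : ℝ} (ha : 0 < a) (hs1 : s ≤ 1)
    (hcase : s = 1 → t < a) : ∃ δ > 0, ∀ᶠ x : ℝ in atTop, t * x ^ (s - 1) ≤ a - δ := by
  rcases hs1.eq_or_lt with rfl | hs1
  · exact ⟨a - t, by linarith [hcase rfl], Eventually.of_forall fun x => by simp⟩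
  · have h : Tendsto (fun x : ℝ => t * x ^ (s - 1)) atTop (𝓝 0) := by
      simpa using (tendsto_rpow_neg_atTop (sub_pos.2 hs1)).const_mul t
    exact ⟨a / 2, half_pos ha, h.eventually_le_const (half_pos ha)
      |>.mono fun x hx => by linarith⟩

lemma le_div_rpow_of_sum_le {u : ℕ → ℝ} (hu : ∀ k, 0 ≤ u k) {t M : ℝ} {n k : ℕ} (hk : 0 < k)
    (hkn : k < n) (hM : ∑ i ∈ range n, u i * (i : ℝ) ^ t ≤ M) : u k ≤ M / (k : ℝ) ^ t := by
  rw [le_div_iff₀ (rpow_pos_of_pos (Nat.cast_pos.2 hk) t)]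
  exact (single_le_sum (f := fun i => u i * (i : ℝ) ^ t)
    (fun i _ => mul_nonneg (hu i) (rpow_nonneg i.cast_nonneg t)) (mem_range.2 hkn)).trans hM

lemma le_div_rpow_of_recurrence_le {u : ℕ → ℝ} {a s t C D : ℝ} {K : ℕ} (hK : 0 < K)
    (ht : 0 ≤ t) (hD : 0 ≤ D) (hgap : ∀ k ≥ K, C + D * t * (k : ℝ) ^ (s - 1) ≤ a * D)
    (hak : ∀ k ≥ K, a ≤ (k : ℝ) ^ s)
    (hrec : ∀ k ≥ K, u (k + 1) ≤ (1 - a / (k : ℝ) ^ s) * u k + C / (k : ℝ) ^ (s + t))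
    (huK : u K ≤ D / (K : ℝ) ^ t) {k : ℕ} (hk : K ≤ k) : u k ≤ D / (k : ℝ) ^ t := by
  have hpos : ∀ k ≥ K, (0 : ℝ) < k := fun k hk => by exact_mod_cast hK.trans_le hk
  refine le_of_recurrence_le (v := fun k => D / (k : ℝ) ^ t) (fun k hk => ?_) hrec
    (fun k hk => ?_) huK hk
  · rw [sub_nonneg, div_le_one (rpow_pos_of_pos (hpos k hk) s)]
    exact hak k hk
  · simpa only [Nat.cast_succ] using recurrence_div_rpow_le (hpos k hk) ht hD (hgap k hk)

/-- Chung's lemma: if a nonnegative sequence satisfies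
`u_{k+1} ≤ (1 − a/k^s) u_k + C/k^{s+t}` for all `k > k₀` (with `0 < s ≤ 1`, `a > 0`, `t > 0`,
`C > 0`, and `a > t` in the case `s = 1`), then `u_k = O(1/k^t)`. -/
theorem chung_lemma (u : ℕ → ℝ) (hu : ∀ k, 0 ≤ u k) (s a t C : ℝ) (k₀ : ℕ)
    (hs : 0 < s) (hs1 : s ≤ 1) (ha : 0 < a) (ht : 0 < t) (hC : 0 < C)
    (hcase : s = 1 → t < a)
    (hrec : ∀ k : ℕ, k₀ < k → u (k + 1) ≤ (1 - a / (k : ℝ) ^ s) * u k + C / (k : ℝ) ^ (s + t)) :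
    ∃ C' > 0, ∀ k : ℕ, 1 ≤ k → u k ≤ C' / (k : ℝ) ^ t := by
  obtain ⟨δ, hδ, hgap⟩ := exists_pos_eventually_mul_rpow_sub_one_le ha hs1 hcase
  obtain ⟨K, hK⟩ := eventually_atTop.1 <| (eventually_gt_atTop k₀).and <|
    (tendsto_natCast_atTop_atTop.eventually hgap).and <|
    tendsto_natCast_atTop_atTop.eventually ((tendsto_rpow_atTop hs).eventually_ge_atTop a)
  have hCδ : 0 < C / δ := div_pos hC hδ
  have hsum : 0 ≤ ∑ i ∈ range (K + 1), u i * (i : ℝ) ^ t :=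
    sum_nonneg fun i _ => mul_nonneg (hu i) (rpow_nonneg i.cast_nonneg t)
  set C' := C / δ + ∑ i ∈ range (K + 1), u i * (i : ℝ) ^ t
  have hC' : 0 < C' := add_pos_of_pos_of_nonneg hCδ hsum
  have hCC' : C ≤ C' * δ := (div_le_iff₀ hδ).1 (le_add_of_nonneg_right hsum)
  have hhead : ∀ k, 0 < k → k ≤ K → u k ≤ C' / (k : ℝ) ^ t := fun k hk hkK =>
    le_div_rpow_of_sum_le hu hk (Nat.lt_succ_of_le hkK) (le_add_of_nonneg_left hCδ.le)
  have hK₀ : 0 < K := Nat.zero_lt_of_lt (hK K le_rfl).1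
  have htail : ∀ k ≥ K, u k ≤ C' / (k : ℝ) ^ t := fun k =>
    le_div_rpow_of_recurrence_le hK₀ ht.le hC'.le
      (fun k hk => by nlinarith [mul_le_mul_of_nonneg_left (hK k hk).2.1 hC'.le])
      (fun k hk => (hK k hk).2.2) (fun k hk => hrec k (hK k hk).1) (hhead K hK₀ le_rfl)
  exact ⟨C', hC', fun k hk => (le_total k K).elim (hhead k hk) (htail k)⟩
end

section
/- Let f : ℝ^n → ℝ be differentiable with L_f-Lipschitz gradient, let a_1,…,a_m ∈ ℝ^n be nonzero, b_1,…,b_m ∈ ℝ, δ > 0, γ > 0, and let x_γδ* be the minimizer of F_{γδ} over ℝ^n and x* a point of ℝ^n (the constrained minimizer). Then for every x ∈ ℝ^n, the average squared norm of the incremental gradient estimates satisfies (1/m) Σ_{i=1}^m ‖∇f(x) + γ ∇h_δ(x; a_i, b_i)‖² ≤ 8 L_f² ‖x − x_γδ*‖² + 8 L_f² ‖x_γδ* − x*‖² + 4 ‖∇f(x*)‖² + 2γ². -/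
open scoped RealInnerProductSpace

/-- numerator function -/
noncomputable def psi (δ t : ℝ) : ℝ :=
  if δ < t then 4 * δ * t else if -δ ≤ t then (t + δ) ^ 2 else 0

lemma psi_step {δ s t : ℝ} (hδ : 0 < δ) (hst : s ≤ t) :
    0 ≤ psi δ t - psi δ s ∧ psi δ t - psi δ s ≤ 4 * δ * (t - s) := by
  unfold psi
  split_ifs <;> constructor <;>
    nlinarith [sq_nonneg (s - δ), sq_nonneg (t - δ), sq_nonneg (s + δ),
      sq_nonneg (t + δ), sq_nonneg (t - s)]

lemma psi_abs {δ s t : ℝ} (hδ : 0 < δ) :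
    |psi δ t - psi δ s| ≤ 4 * δ * |t - s| := by
  rcases le_total s t with h | h
  · obtain ⟨h1, h2⟩ := psi_step hδ h
    rw [abs_of_nonneg h1, abs_of_nonneg (by linarith)]
    exact h2
  · obtain ⟨h1, h2⟩ := psi_step hδ h
    rw [abs_sub_comm, abs_sub_comm t s, abs_of_nonneg h1, abs_of_nonneg (by linarith)]
    exact h2

lemma huber_eq {n : ℕ} (δ : ℝ) (hδ : 0 < δ) (a : EuclideanSpace ℝ (Fin n)) (ha : a ≠ 0)
    (b : ℝ) (x : EuclideanSpace ℝ (Fin n)) :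
    huber δ a b x = psi δ (⟪a, x⟫ - b) / (4 * δ * ‖a‖) := by
  have hna : (0:ℝ) < ‖a‖ := norm_pos_iff.mpr ha
  unfold huber psi
  split_ifs <;> field_simp <;> ring

lemma huber_lipschitz {n : ℕ} (δ : ℝ) (hδ : 0 < δ) (a : EuclideanSpace ℝ (Fin n))
    (ha : a ≠ 0) (b : ℝ) : LipschitzWith 1 (huber δ a b) := by
  have hna : (0:ℝ) < ‖a‖ := norm_pos_iff.mpr ha
  apply LipschitzWith.of_dist_le_mul
  intro x y
  rw [Real.dist_eq, huber_eq δ hδ a ha b, huber_eq δ hδ a ha b, div_sub_div_same, abs_div,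
    abs_of_pos (by positivity : (0:ℝ) < 4 * δ * ‖a‖)]
  rw [div_le_iff₀ (by positivity)]
  have h1 : |(⟪a, x⟫ - b) - (⟪a, y⟫ - b)| ≤ ‖a‖ * ‖x - y‖ := by
    have : (⟪a, x⟫ - b) - (⟪a, y⟫ - b) = ⟪a, x - y⟫ := by
      rw [inner_sub_right]; ring
    rw [this]
    exact abs_real_inner_le_norm a (x - y)
  calc |psi δ (⟪a, x⟫ - b) - psi δ (⟪a, y⟫ - b)| ≤ 4 * δ * |(⟪a, x⟫ - b) - (⟪a, y⟫ - b)| :=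
        psi_abs hδ
    _ ≤ 4 * δ * (‖a‖ * ‖x - y‖) := by
        exact mul_le_mul_of_nonneg_left h1 (by positivity)
    _ = 1 * dist x y * (4 * δ * ‖a‖) := by rw [dist_eq_norm]; ring

lemma grad_huber_le {n : ℕ} (δ : ℝ) (hδ : 0 < δ) (a : EuclideanSpace ℝ (Fin n))
    (ha : a ≠ 0) (b : ℝ) (x : EuclideanSpace ℝ (Fin n)) :
    ‖gradient (huber δ a b) x‖ ≤ 1 := by
  have h := norm_fderiv_le_of_lipschitz ℝ (huber_lipschitz δ hδ a ha b) (x₀ := x)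
  rw [gradient]
  rw [LinearIsometryEquiv.norm_map]
  simpa using h

/-- Bound on the average squared norm of the incremental gradient estimates:
`(1/m) Σ_i ‖∇f(x) + γ∇h_δ(x; a_i, b_i)‖² ≤ 8L_f²‖x − x_{γδ}*‖² + 8L_f²‖x_{γδ}* − x*‖²
+ 4‖∇f(x*)‖² + 2γ²`. -/
theorem incremental_gradient_bound {n m : ℕ} (hm : 0 < m)
    (f : EuclideanSpace ℝ (Fin n) → ℝ) (L_f : ℝ) (hdf : Differentiable ℝ f)
    (hLip : ∀ x y : EuclideanSpace ℝ (Fin n),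
      ‖gradient f x - gradient f y‖ ≤ L_f * ‖x - y‖)
    (a : Fin m → EuclideanSpace ℝ (Fin n)) (ha : ∀ i, a i ≠ 0) (b : Fin m → ℝ)
    (γ δ : ℝ) (hγ : 0 < γ) (hδ : 0 < δ)
    (xg : EuclideanSpace ℝ (Fin n))
    (hxg : IsMinOn (fun x => f x + (γ / m) * ∑ i, huber δ (a i) (b i) x) Set.univ xg)
    (xstar : EuclideanSpace ℝ (Fin n)) (x : EuclideanSpace ℝ (Fin n)) :
    (1 / m) * ∑ i, ‖gradient f x + γ • gradient (huber δ (a i) (b i)) x‖ ^ 2 ≤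
      8 * L_f ^ 2 * ‖x - xg‖ ^ 2 + 8 * L_f ^ 2 * ‖xg - xstar‖ ^ 2 +
        4 * ‖gradient f xstar‖ ^ 2 + 2 * γ ^ 2 := by
  have hm' : (0:ℝ) < m := by exact_mod_cast hm
  set g := gradient f with hg
  have hterm : ∀ i : Fin m, ‖g x + γ • gradient (huber δ (a i) (b i)) x‖ ^ 2 ≤
      2 * ‖g x‖ ^ 2 + 2 * γ ^ 2 := by
    intro i
    have h1 : ‖g x + γ • gradient (huber δ (a i) (b i)) x‖ ≤ ‖g x‖ + γ := by
      calc ‖g x + γ • gradient (huber δ (a i) (b i)) x‖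
          ≤ ‖g x‖ + ‖γ • gradient (huber δ (a i) (b i)) x‖ := norm_add_le _ _
        _ = ‖g x‖ + γ * ‖gradient (huber δ (a i) (b i)) x‖ := by
            rw [norm_smul, Real.norm_of_nonneg hγ.le]
        _ ≤ ‖g x‖ + γ * 1 := by
            gcongr
            exact grad_huber_le δ hδ (a i) (ha i) (b i) x
        _ = ‖g x‖ + γ := by ring
    have h0 : (0:ℝ) ≤ ‖g x + γ • gradient (huber δ (a i) (b i)) x‖ := norm_nonneg _
    nlinarith [sq_nonneg (‖g x‖ - γ), norm_nonneg (g x)]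
  have hsum : ∑ i, ‖g x + γ • gradient (huber δ (a i) (b i)) x‖ ^ 2 ≤
      (m : ℝ) * (2 * ‖g x‖ ^ 2 + 2 * γ ^ 2) := by
    calc ∑ i, ‖g x + γ • gradient (huber δ (a i) (b i)) x‖ ^ 2
        ≤ ∑ _i : Fin m, (2 * ‖g x‖ ^ 2 + 2 * γ ^ 2) :=
          Finset.sum_le_sum (fun i _ => hterm i)
      _ = (m : ℝ) * (2 * ‖g x‖ ^ 2 + 2 * γ ^ 2) := by
          simp [Finset.sum_const, Finset.card_univ]; ring
  have hgx : 2 * ‖g x‖ ^ 2 ≤ 8 * L_f ^ 2 * ‖x - xg‖ ^ 2 + 8 * L_f ^ 2 * ‖xg - xstar‖ ^ 2 +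
      4 * ‖g xstar‖ ^ 2 := by
    have p1 : ‖g x - g xg‖ ≤ L_f * ‖x - xg‖ := hLip x xg
    have p2 : ‖g xg - g xstar‖ ≤ L_f * ‖xg - xstar‖ := hLip xg xstar
    have p3 : ‖g x‖ ≤ ‖g x - g xg‖ + ‖g xg - g xstar‖ + ‖g xstar‖ := by
      calc ‖g x‖ = ‖(g x - g xg) + (g xg - g xstar) + g xstar‖ := by congr 1; abel
        _ ≤ ‖(g x - g xg) + (g xg - g xstar)‖ + ‖g xstar‖ := norm_add_le _ _
        _ ≤ ‖g x - g xg‖ + ‖g xg - g xstar‖ + ‖g xstar‖ := by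
            gcongr; exact norm_add_le _ _
    nlinarith [norm_nonneg (g x - g xg), norm_nonneg (g xg - g xstar), norm_nonneg (g xstar),
      norm_nonneg (g x), sq_nonneg (‖g x - g xg‖ + ‖g xg - g xstar‖ - ‖g xstar‖),
      sq_nonneg (‖g x - g xg‖ - ‖g xg - g xstar‖)]
  calc (1 / (m:ℝ)) * ∑ i, ‖g x + γ • gradient (huber δ (a i) (b i)) x‖ ^ 2
      ≤ (1 / (m:ℝ)) * ((m : ℝ) * (2 * ‖g x‖ ^ 2 + 2 * γ ^ 2)) := by
        apply mul_le_mul_of_nonneg_left hsum (by positivity)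
    _ = 2 * ‖g x‖ ^ 2 + 2 * γ ^ 2 := by field_simp
    _ ≤ 8 * L_f ^ 2 * ‖x - xg‖ ^ 2 + 8 * L_f ^ 2 * ‖xg - xstar‖ ^ 2 +
        4 * ‖g xstar‖ ^ 2 + 2 * γ ^ 2 := by linarith
end
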